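/- arXiv:2004.06444 — 5 statements merged into one kernel-verified Lean document; each statement's English description precedes it below -/
import Mathlib

section
/- For λ in the cone Γ_m ⊂ ℝⁿ and 1 ≤ j ≤ i ≤ m, one has (S_j(λ))^{1/j} ≥ (S_i(λ))^{1/i}, where S_k(λ) = σ_k(λ)/C(n,k). -/
/-!
Newton's inequalities `S_k S_{k+2} ≤ S_{k+1}²` hold for every finite multiset of reals.
Replacing `∏ (X - a)` by its derivative keeps all roots real (Rolle) and leaves the normalized
`S_j` of the roots unchanged, so it suffices to treat multisets with `k + 2` elements. If none of
them vanishes, inverting them turns `S_k, S_{k+1}, S_{k+2}` into `S_2, S_1, S_0` times their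
product, and after a further reduction to two elements the inequality is AM–GM.
On `Γ_m`, Newton's inequalities give `S_{k+1}^k ≤ S_k^{k+1}` by induction on `k`, so `S_k^{1/k}`
is nonincreasing for `1 ≤ k ≤ m`.
-/

open Finset

/-- The `k`-th elementary symmetric polynomial of a vector in `ℝⁿ`. -/
noncomputable def esym (n k : ℕ) (x : Fin n → ℝ) : ℝ :=
  ∑ t ∈ Finset.powersetCard k (Finset.univ : Finset (Fin n)), ∏ i ∈ t, x i

/-- The normalized `k`-th symmetric function `S_k = σ_k / C(n,k)`. -/
noncomputable def normEsym (n k : ℕ) (x : Fin n → ℝ) : ℝ :=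
  esym n k x / (n.choose k : ℝ)

open Polynomial

namespace Multiset

section CommSemiring

variable {R : Type*} [CommSemiring R]

theorem esymm_cons_succ (a : R) (s : Multiset R) (k : ℕ) :
    (a ::ₘ s).esymm (k + 1) = s.esymm (k + 1) + a * s.esymm k := by
  simp [esymm, sum_map_mul_left]

theorem esymm_zero (s : Multiset R) : s.esymm 0 = 1 := by
  simp [esymm]

theorem esymm_card (s : Multiset R) : s.esymm (card s) = s.prod := by
  simp [esymm]

theorem esymm_eq_zero_of_card_lt {s : Multiset R} {k : ℕ} (h : card s < k) : s.esymm k = 0 := by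
  simp [esymm, powersetCard_eq_empty k h]

end CommSemiring

section Field

variable {K : Type*} [Field K]

theorem esymm_map_inv_mul_prod {s : Multiset K} (h0 : (0 : K) ∉ s) {k l : ℕ}
    (hkl : card s = k + l) : (s.map (·⁻¹)).esymm k * s.prod = s.esymm l := by
  induction s using Multiset.induction generalizing k l with
  | empty =>
    obtain ⟨rfl, rfl⟩ : k = 0 ∧ l = 0 := by simpa [eq_comm] using hkl
    simp [esymm_zero]
  | cons a s ih =>
    have ha : a ≠ 0 := fun h => h0 (h ▸ mem_cons_self a s)
    have h0s : (0 : K) ∉ s := fun h => h0 (mem_cons_of_mem h)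
    rcases k with _ | k
    · rw [zero_add] at hkl
      rw [esymm_zero, one_mul, ← hkl, esymm_card]
    rcases l with _ | l
    · rw [add_zero] at hkl
      rw [esymm_zero, ← hkl, ← card_map (·⁻¹), esymm_card, prod_map_inv, map_id',
        inv_mul_cancel₀ (prod_ne_zero h0)]
    rw [card_cons] at hkl
    rw [map_cons, esymm_cons_succ, esymm_cons_succ, prod_cons,
      ← ih h0s (k := k + 1) (l := l) (by omega), ← ih h0s (k := k) (l := l + 1) (by omega)]
    field_simp
    ring

noncomputable def normEsymm (s : Multiset K) (k : ℕ) : K :=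
  s.esymm k / (card s).choose k

theorem normEsymm_zero (s : Multiset K) : s.normEsymm 0 = 1 := by
  simp [normEsymm, esymm_zero]

theorem normEsymm_card (s : Multiset K) : s.normEsymm (card s) = s.prod := by
  simp [normEsymm, esymm_card]

theorem normEsymm_eq_zero_of_card_lt {s : Multiset K} {k : ℕ} (h : card s < k) :
    s.normEsymm k = 0 := by
  simp [normEsymm, esymm_eq_zero_of_card_lt h]

theorem normEsymm_map_inv_mul_prod {s : Multiset K} (h0 : (0 : K) ∉ s) {k l : ℕ}
    (hkl : card s = k + l) : (s.map (·⁻¹)).normEsymm k * s.prod = s.normEsymm l := by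
  rw [normEsymm, normEsymm, card_map, div_mul_eq_mul_div, esymm_map_inv_mul_prod h0 hkl, hkl,
    Nat.choose_symm_add]

end Field

theorem card_roots_derivative_prod_X_sub_C (s : Multiset ℝ) :
    card (derivative (s.map (X - C ·)).prod).roots = card s - 1 := by
  have h_rolle := card_roots_le_derivative (s.map (X - C ·)).prod
  have h_deg := card_roots' (derivative (s.map (X - C ·)).prod)
  rw [roots_multiset_prod_X_sub_C] at h_rolle
  rw [natDegree_derivative, natDegree_multiset_prod_X_sub_C_eq_card] at h_deg
  omega

theorem esymm_roots_derivative_prod_X_sub_C {s : Multiset ℝ} {n : ℕ} (hs : card s = n + 1)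
    {j : ℕ} (hj : j ≤ n) :
    ((n : ℝ) + 1) * (derivative (s.map (X - C ·)).prod).roots.esymm j
      = ((n : ℝ) + 1 - j) * s.esymm j := by
  set p := (s.map (X - C ·)).prod
  have hp_deg : p.natDegree = n + 1 := by rw [natDegree_multiset_prod_X_sub_C_eq_card, hs]
  have hp'_deg : (derivative p).natDegree = n := by rw [natDegree_derivative, hp_deg]; rfl
  have hp'_roots : card (derivative p).roots = (derivative p).natDegree := by
    rw [card_roots_derivative_prod_X_sub_C, hs, hp'_deg]; rfl
  have h_vieta' := coeff_eq_esymm_roots_of_card hp'_roots (k := n - j) (by omega)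
  rw [leadingCoeff_derivative, (monic_multisetProd_X_sub_C s).leadingCoeff, hp_deg, hp'_deg,
    Nat.sub_sub_self hj] at h_vieta'
  have h_vieta := prod_X_sub_C_coeff s (k := n - j + 1) (by omega)
  rw [hs, show n + 1 - (n - j + 1) = j by omega] at h_vieta
  have h_coeff := coeff_derivative p (n - j)
  rw [h_vieta', h_vieta, Nat.cast_sub hj] at h_coeff
  push_cast at h_coeff
  apply mul_left_cancel₀ (pow_ne_zero j (by norm_num : (-1 : ℝ) ≠ 0))
  linear_combination h_coeff

theorem normEsymm_roots_derivative_prod_X_sub_C {s : Multiset ℝ} {n : ℕ} (hs : card s = n + 1)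
    {j : ℕ} (hj : j ≤ n) :
    (derivative (s.map (X - C ·)).prod).roots.normEsymm j = s.normEsymm j := by
  have h_choose : (n.choose j : ℝ) * (n + 1) = ((n + 1).choose j : ℝ) * (n + 1 - j) := by
    have := congrArg (Nat.cast : ℕ → ℝ) (Nat.choose_mul_succ_eq n j)
    push_cast [Nat.cast_sub (show j ≤ n + 1 by omega)] at this
    exact this
  have h_choose_pos : 0 < n.choose j := Nat.choose_pos hj
  have h_choose_pos' : 0 < (n + 1).choose j := Nat.choose_pos (by omega)
  have h_pos : (0 : ℝ) < n + 1 - j := by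
    linarith [show (j : ℝ) ≤ n by exact_mod_cast hj]
  rw [normEsymm, normEsymm, card_roots_derivative_prod_X_sub_C, hs, Nat.add_sub_cancel,
    div_eq_div_iff (by positivity) (by positivity)]
  apply mul_left_cancel₀ h_pos.ne'
  linear_combination (-(derivative (s.map (X - C ·)).prod).roots.esymm j) * h_choose
    + (n.choose j : ℝ) * esymm_roots_derivative_prod_X_sub_C hs hj

theorem exists_card_eq_normEsymm_eq (s : Multiset ℝ) {d : ℕ} (hd : d ≤ card s) :
    ∃ t : Multiset ℝ, card t = d ∧ ∀ j ≤ d, t.normEsymm j = s.normEsymm j := by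
  obtain ⟨e, he⟩ := Nat.exists_eq_add_of_le hd
  induction e generalizing s with
  | zero => exact ⟨s, he, fun _ _ => rfl⟩
  | succ e ih =>
    rw [← add_assoc] at he
    set t := (derivative (s.map (X - C ·)).prod).roots
    have ht : card t = d + e := by rw [card_roots_derivative_prod_X_sub_C, he, Nat.add_sub_cancel]
    obtain ⟨u, hu, hut⟩ := ih t (by omega) ht
    refine ⟨u, hu, fun j hj => ?_⟩
    rw [hut j hj, normEsymm_roots_derivative_prod_X_sub_C he (by omega)]

theorem normEsymm_two_le_sq_of_card_eq_two {s : Multiset ℝ} (hs : card s = 2) :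
    s.normEsymm 2 ≤ s.normEsymm 1 ^ 2 := by
  obtain ⟨a, b, rfl⟩ := card_eq_two.mp hs
  simp only [normEsymm, insert_eq_cons, esymm_pair_one, esymm_pair_two]
  norm_num
  nlinarith [sq_nonneg (a - b)]

theorem normEsymm_mul_le_sq_of_card_eq {s : Multiset ℝ} {d : ℕ} (hs : card s = d + 2) :
    s.normEsymm d * s.normEsymm (d + 2) ≤ s.normEsymm (d + 1) ^ 2 := by
  have h_top : s.normEsymm (d + 2) = s.prod := hs ▸ normEsymm_card s
  by_cases h0 : (0 : ℝ) ∈ s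
  · rw [h_top, prod_eq_zero h0, mul_zero]
    positivity
  obtain ⟨t, ht, hts⟩ := exists_card_eq_normEsymm_eq (s.map (·⁻¹)) (d := 2) (by simp [hs])
  have h_amgm : (s.map (·⁻¹)).normEsymm 2 ≤ (s.map (·⁻¹)).normEsymm 1 ^ 2 := by
    rw [← hts 1 (by norm_num), ← hts 2 le_rfl]
    exact normEsymm_two_le_sq_of_card_eq_two ht
  have h2 := normEsymm_map_inv_mul_prod h0 (k := 2) (l := d) (by omega)
  have h1 := normEsymm_map_inv_mul_prod h0 (k := 1) (l := d + 1) (by omega)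
  calc s.normEsymm d * s.normEsymm (d + 2)
      = (s.map (·⁻¹)).normEsymm 2 * s.prod ^ 2 := by rw [h_top, ← h2]; ring
    _ ≤ (s.map (·⁻¹)).normEsymm 1 ^ 2 * s.prod ^ 2 := by gcongr
    _ = s.normEsymm (d + 1) ^ 2 := by rw [← h1]; ring

theorem normEsymm_mul_le_sq (s : Multiset ℝ) (k : ℕ) :
    s.normEsymm k * s.normEsymm (k + 2) ≤ s.normEsymm (k + 1) ^ 2 := by
  by_cases hk : card s < k + 2
  · rw [normEsymm_eq_zero_of_card_lt hk, mul_zero]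
    positivity
  obtain ⟨t, ht, hts⟩ := exists_card_eq_normEsymm_eq s (d := k + 2) (by omega)
  rw [← hts k (by omega), ← hts (k + 1) (by omega), ← hts (k + 2) le_rfl]
  exact normEsymm_mul_le_sq_of_card_eq ht

end Multiset

theorem rpow_one_div_succ_le_of_pow_le {b c : ℝ} (hb : 0 ≤ b) (hc : 0 ≤ c) {k : ℕ}
    (hk : 1 ≤ k) (h : c ^ k ≤ b ^ (k + 1)) :
    c ^ ((1 : ℝ) / (k + 1 : ℕ)) ≤ b ^ ((1 : ℝ) / k) := by
  calc c ^ ((1 : ℝ) / (k + 1 : ℕ))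
      = (c ^ k) ^ ((1 : ℝ) / (k * (k + 1))) := by
        rw [← Real.rpow_natCast, ← Real.rpow_mul hc]
        congr 1
        field_simp
        push_cast
        ring
    _ ≤ (b ^ (k + 1)) ^ ((1 : ℝ) / (k * (k + 1))) := by gcongr
    _ = b ^ ((1 : ℝ) / k) := by
        rw [← Real.rpow_natCast, ← Real.rpow_mul hb]
        congr 1
        field_simp
        push_cast
        ring

section NewtonToMaclaurin

variable {a : ℕ → ℝ} {m : ℕ}

theorem pow_succ_le_pow_of_mul_le_sq (h0 : a 0 = 1)
    (h_newton : ∀ k, a k * a (k + 2) ≤ a (k + 1) ^ 2)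
    (h_pos : ∀ j, 1 ≤ j → j ≤ m → 0 < a j) {k : ℕ} (hk : k + 1 ≤ m) :
    a (k + 1) ^ k ≤ a k ^ (k + 1) := by
  induction k with
  | zero => simp [h0]
  | succ k ih =>
    have h_nonneg : 0 ≤ a k := by
      rcases k with _ | k
      · simp [h0]
      · exact (h_pos _ (by omega) (by omega)).le
    have h1 := h_pos (k + 1) (by omega) (by omega)
    have h2 := h_pos (k + 2) (by omega) (by omega)
    refine le_of_mul_le_mul_right ?_ (pow_pos h1 k)
    calc a (k + 2) ^ (k + 1) * a (k + 1) ^ k ≤ a (k + 2) ^ (k + 1) * a k ^ (k + 1) := by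
          gcongr
          exact ih (by omega)
      _ = (a k * a (k + 2)) ^ (k + 1) := by ring
      _ ≤ (a (k + 1) ^ 2) ^ (k + 1) :=
          pow_le_pow_left₀ (mul_nonneg h_nonneg h2.le) (h_newton k) _
      _ = a (k + 1) ^ (k + 1 + 1) * a (k + 1) ^ k := by ring

theorem rpow_one_div_le_of_mul_le_sq (h0 : a 0 = 1)
    (h_newton : ∀ k, a k * a (k + 2) ≤ a (k + 1) ^ 2)
    (h_pos : ∀ j, 1 ≤ j → j ≤ m → 0 < a j) {j i : ℕ} (hj : 1 ≤ j) (hji : j ≤ i)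
    (him : i ≤ m) :
    a i ^ ((1 : ℝ) / i) ≤ a j ^ ((1 : ℝ) / j) := by
  induction i, hji using Nat.le_induction with
  | base => exact le_rfl
  | succ i hji ih =>
    refine le_trans ?_ (ih (by omega))
    exact rpow_one_div_succ_le_of_pow_le (h_pos i (by omega) (by omega)).le
      (h_pos (i + 1) (by omega) him).le (by omega)
      (pow_succ_le_pow_of_mul_le_sq h0 h_newton h_pos him)

end NewtonToMaclaurin

theorem normEsym_eq_normEsymm (n k : ℕ) (x : Fin n → ℝ) :
    normEsym n k x = (univ.val.map x).normEsymm k := by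
  rw [normEsym, esym, ← Finset.esymm_map_val, Multiset.normEsymm, Multiset.card_map, card_val,
    card_univ, Fintype.card_fin]

/-- Maclaurin's inequality: for `λ ∈ Γ_m` (i.e. `S_1(λ) > 0, …, S_m(λ) > 0`) and
`1 ≤ j ≤ i ≤ m` one has `S_j(λ)^{1/j} ≥ S_i(λ)^{1/i}`. -/
theorem maclaurin_inequality (n m : ℕ) (x : Fin n → ℝ)
    (hΓ : ∀ j, 1 ≤ j → j ≤ m → 0 < normEsym n j x)
    (j i : ℕ) (hj : 1 ≤ j) (hji : j ≤ i) (him : i ≤ m) :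
    (normEsym n i x) ^ ((1 : ℝ) / i) ≤ (normEsym n j x) ^ ((1 : ℝ) / j) := by
  refine rpow_one_div_le_of_mul_le_sq (a := fun k => normEsym n k x) ?_ ?_ hΓ hj hji him
  · simp only [normEsym_eq_normEsymm, Multiset.normEsymm_zero]
  · intro k
    simp only [normEsym_eq_normEsymm]
    exact Multiset.normEsymm_mul_le_sq _ k
end

section
/- Let γ ∈ ℝ^{n-1} satisfy σ_j(γ) > 0 for j = 1,...,n-k (i.e. γ ∈ Γ_{n-k}) and suppose σ_{n-k+1}(γ) ≥ σ_{n-k}(γ). Then σ_j(γ) ≥ σ_{j-1}(γ) for every j = 1,...,n-k+1; in particular σ_1(γ) ≥ 1. -/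
/-!
Newton's inequality `σ_{j-1} σ_{j+1} ≤ σ_j²` holds for every real vector: `∏ (X + γ_a)` has only
real roots, and so do its derivatives (Rolle) and its reversal. Differentiating, reversing and
differentiating again isolates three consecutive coefficients in a real-rooted quadratic, whose
discriminant is nonnegative. Since `σ_0 = 1, σ_1, …, σ_{n-k}` are positive, Newton's inequality
turns `σ_j ≤ σ_{j+1}` into `σ_{j-1} ≤ σ_j`, so monotonicity propagates downward from the assumed
step `σ_{n-k} ≤ σ_{n-k+1}`.
-/

open Finset

namespace Polynomial

open scoped Nat

theorem Splits.reverse {K : Type*} [DivisionRing K] {p : K[X]} (hp : p.Splits) :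
    p.reverse.Splits := by
  induction hp using Submonoid.closure_induction with
  | mem f hf =>
    rcases hf with ⟨a, rfl⟩ | ⟨a, rfl⟩
    · simp
    · exact .of_natDegree_le_one ((reverse_natDegree_le _).trans (natDegree_X_add_C a).le)
  | one => rw [← C_1, reverse_C]; exact Splits.C 1
  | mul f g _ _ hf hg => rw [reverse_mul_of_domain]; exact hf.mul hg

theorem Splits.derivative {p : ℝ[X]} (hp : p.Splits) : (Polynomial.derivative p).Splits := by
  rw [splits_iff_card_roots] at hp ⊢
  have hrolle := p.card_roots_le_derivative
  have hroots := (Polynomial.derivative p).card_roots'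
  have hdeg := p.natDegree_derivative_le
  omega

theorem Splits.iterate_derivative {p : ℝ[X]} (hp : p.Splits) (k : ℕ) :
    (Polynomial.derivative^[k] p).Splits := by
  induction k with
  | zero => exact hp
  | succ k ih => rw [Function.iterate_succ_apply']; exact ih.derivative

theorem Splits.four_mul_coeff_mul_le_sq {K : Type*} [Field K] [LinearOrder K]
    [IsStrictOrderedRing K] {p : K[X]} (hp : p.Splits) (h2 : p.natDegree ≤ 2) :
    4 * p.coeff 2 * p.coeff 0 ≤ p.coeff 1 ^ 2 := by
  by_cases hc : p.coeff 2 = 0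
  · simpa [hc] using sq_nonneg (p.coeff 1)
  have hdeg : p.natDegree = 2 := natDegree_eq_of_le_of_coeff_ne_zero h2 hc
  obtain ⟨x, hx⟩ := hp.exists_eval_eq_zero (by
    rw [degree_eq_natDegree (by rintro rfl; simp at hc), hdeg]; decide)
  have hquad : p.coeff 2 * (x * x) + p.coeff 1 * x + p.coeff 0 = 0 := by
    rw [← hx, eval_eq_sum_range, hdeg]
    simp only [Finset.sum_range_succ, Finset.sum_range_zero]
    ring
  have hdisc := discrim_eq_sq_of_quadratic_eq_zero hquad
  rw [discrim] at hdisc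
  nlinarith [sq_nonneg (2 * p.coeff 2 * x + p.coeff 1)]

theorem factorial_mul_coeff_iterate_derivative {R : Type*} [Semiring R] (p : R[X]) (k s : ℕ) :
    (s ! : R) * (derivative^[k] p).coeff s = (s + k)! * p.coeff (s + k) := by
  have h := Nat.factorial_mul_descFactorial (Nat.le_add_left k s)
  rw [Nat.add_sub_cancel] at h
  rw [coeff_iterate_derivative, nsmul_eq_mul, ← mul_assoc, ← Nat.cast_mul, h]

theorem Splits.newton {p : ℝ[X]} (hp : p.Splits) {r e : ℕ} (hdeg : p.natDegree = r + e + 2) :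
    ((r + 2) * (e + 2) : ℝ) * (p.coeff r * p.coeff (r + 2)) ≤
      ((r + 1) * (e + 1) : ℝ) * p.coeff (r + 1) ^ 2 := by
  set q := Polynomial.derivative^[r] p
  have hq (s : ℕ) : (s ! : ℝ) * q.coeff s = (s + r)! * p.coeff (s + r) :=
    factorial_mul_coeff_iterate_derivative p r s
  have hqdeg : q.natDegree = e + 2 := by
    refine natDegree_eq_of_le_of_coeff_ne_zero ?_ fun h0 ↦ ?_
    · have : q.natDegree ≤ p.natDegree - r := natDegree_iterate_derivative p r
      omega
    · have := hq (e + 2)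
      rw [h0, mul_zero, show e + 2 + r = p.natDegree by omega, coeff_natDegree] at this
      have hp0 : p ≠ 0 := by rintro rfl; simp at hdeg
      simp [Nat.factorial_ne_zero, hp0] at this
  -- a quadratic whose coefficients are `a_{r+2}, a_{r+1}, a_r` up to factorials
  set S := Polynomial.derivative^[e] q.reverse
  have hS (s : ℕ) (hs : s ≤ 2) : (s ! : ℝ) * S.coeff s = (s + e)! * q.coeff (2 - s) := by
    rw [factorial_mul_coeff_iterate_derivative, coeff_reverse, hqdeg, revAt_le (by omega),
      show e + 2 - (s + e) = 2 - s by omega]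
  have hdisc : 4 * S.coeff 2 * S.coeff 0 ≤ S.coeff 1 ^ 2 := by
    refine ((hp.iterate_derivative r).reverse.iterate_derivative e).four_mul_coeff_mul_le_sq ?_
    change S.natDegree ≤ 2
    have : S.natDegree ≤ q.reverse.natDegree - e := natDegree_iterate_derivative q.reverse e
    have := q.reverse_natDegree_le
    omega
  have hq0 : q.coeff 0 = r ! * p.coeff r := by simpa using hq 0
  have hq1 : q.coeff 1 = (r + 1) * r ! * p.coeff (r + 1) := by
    simpa [add_comm 1 r, Nat.factorial_succ] using hq 1
  have hq2 : q.coeff 2 = (r + 2) * (r + 1) * r ! * p.coeff (r + 2) / 2 := by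
    have := hq 2
    rw [Nat.factorial_two, show 2 + r = r + 1 + 1 by omega, Nat.factorial_succ,
      Nat.factorial_succ] at this
    push_cast at this
    linarith
  have hS0 : S.coeff 0 = e ! * q.coeff 2 := by simpa using hS 0 (by norm_num)
  have hS1 : S.coeff 1 = (e + 1) * e ! * q.coeff 1 := by
    simpa [add_comm 1 e, Nat.factorial_succ] using hS 1 (by norm_num)
  have hS2 : S.coeff 2 = (e + 2) * (e + 1) * e ! * q.coeff 0 / 2 := by
    have := hS 2 le_rfl
    rw [Nat.factorial_two, show 2 + e = e + 1 + 1 by omega, Nat.factorial_succ,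
      Nat.factorial_succ] at this
    push_cast at this
    linarith
  have hpos : (0 : ℝ) < (r + 1) * (e + 1) * (r ! * e !) ^ 2 := by positivity
  refine le_of_mul_le_mul_left ?_ hpos
  calc _ = 4 * S.coeff 2 * S.coeff 0 := by rw [hS2, hS0, hq2, hq0]; ring
    _ ≤ S.coeff 1 ^ 2 := hdisc
    _ = _ := by rw [hS1, hq1]; ring

theorem Splits.coeff_mul_coeff_le_sq {p : ℝ[X]} (hp : p.Splits) (r : ℕ) :
    p.coeff r * p.coeff (r + 2) ≤ p.coeff (r + 1) ^ 2 := by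
  by_cases hr : r + 2 ≤ p.natDegree
  swap
  · rw [coeff_eq_zero_of_natDegree_lt (n := r + 2) (by omega), mul_zero]
    positivity
  obtain ⟨e, he⟩ : ∃ e, p.natDegree = r + e + 2 := ⟨p.natDegree - r - 2, by omega⟩
  have hnewton := hp.newton he
  rcases le_or_gt (p.coeff r * p.coeff (r + 2)) 0 with hneg | hpos
  · nlinarith [sq_nonneg (p.coeff (r + 1))]
  · have hconst : ((r + 1) * (e + 1) : ℝ) ≤ (r + 2) * (e + 2) := by gcongr <;> norm_num
    refine le_of_mul_le_mul_left ?_ (by positivity : (0 : ℝ) < (r + 1) * (e + 1))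
    nlinarith

end Polynomial

open Polynomial

theorem esym_zero (m : ℕ) (γ : Fin m → ℝ) : esym m 0 γ = 1 := by
  simp [esym]

theorem esym_eq_zero_of_lt {m r : ℕ} (hr : m < r) (γ : Fin m → ℝ) : esym m r γ = 0 := by
  rw [esym, Finset.powersetCard_eq_empty.2 (by simpa using hr), Finset.sum_empty]

theorem coeff_prod_X_add_C_eq_esym {m r : ℕ} (hr : r ≤ m) (γ : Fin m → ℝ) :
    (∏ a, (X + C (γ a))).coeff r = esym m (m - r) γ := by
  rw [Finset.prod_X_add_C_coeff _ _ (by simpa using hr)]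
  simp [esym]

theorem esym_mul_esym_le_sq (m j : ℕ) (γ : Fin m → ℝ) :
    esym m j γ * esym m (j + 2) γ ≤ esym m (j + 1) γ ^ 2 := by
  by_cases hj : j + 2 ≤ m
  swap
  · rw [esym_eq_zero_of_lt (r := j + 2) (by omega), mul_zero]
    positivity
  have hsplits : (∏ a, (X + C (γ a))).Splits := Splits.prod fun a _ ↦ Splits.X_add_C (γ a)
  have := hsplits.coeff_mul_coeff_le_sq (m - j - 2)
  rwa [coeff_prod_X_add_C_eq_esym (by omega), coeff_prod_X_add_C_eq_esym (by omega),
    coeff_prod_X_add_C_eq_esym (by omega), show m - (m - j - 2) = j + 2 by omega,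
    show m - (m - j - 2 + 1) = j + 1 by omega, show m - (m - j - 2 + 2) = j by omega,
    mul_comm] at this

theorem le_succ_of_mul_le_sq_of_le_succ {s : ℕ → ℝ} {K : ℕ}
    (hlc : ∀ j, s j * s (j + 2) ≤ s (j + 1) ^ 2) (hpos : ∀ j ≤ K, 0 < s j)
    (hK : s K ≤ s (K + 1)) : ∀ j ≤ K, s j ≤ s (j + 1) := by
  intro j hj
  induction hj using Nat.decreasingInduction with
  | self => exact hK
  | of_succ j hj ih =>
    have hj0 := hpos j hj.le
    have hj1 := hpos (j + 1) hj
    nlinarith [hlc j]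

theorem esym_monotone_of_gammaCone_general (n k : ℕ) (γ : Fin (n - 1) → ℝ)
    (hΓ : ∀ j, 1 ≤ j → j ≤ n - k → 0 < esym (n - 1) j γ)
    (h : esym (n - 1) (n - k) γ ≤ esym (n - 1) (n - k + 1) γ) :
    (∀ j, 1 ≤ j → j ≤ n - k + 1 → esym (n - 1) (j - 1) γ ≤ esym (n - 1) j γ) ∧
      1 ≤ esym (n - 1) 1 γ := by
  have hpos : ∀ j ≤ n - k, 0 < esym (n - 1) j γ := by
    rintro (_ | j) hj
    · simp [esym_zero]
    · exact hΓ _ (by omega) hj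
  have hmono := le_succ_of_mul_le_sq_of_le_succ (esym_mul_esym_le_sq (n - 1) · γ) hpos h
  refine ⟨fun j hj1 hj ↦ ?_, ?_⟩
  · simpa [Nat.sub_add_cancel hj1] using hmono (j - 1) (by omega)
  · simpa [esym_zero] using hmono 0 (Nat.zero_le _)

/-- If `γ ∈ ℝ^{n-1}` lies in `Γ_{n-k}` and `σ_{n-k+1}(γ) ≥ σ_{n-k}(γ)`, then
`σ_j(γ) ≥ σ_{j-1}(γ)` for every `j = 1, …, n-k+1`; in particular `σ_1(γ) ≥ 1`. -/
theorem esym_monotone_of_gammaCone (n k : ℕ) (hk : k ≤ n - 1) (γ : Fin (n - 1) → ℝ)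
    (hΓ : ∀ j, 1 ≤ j → j ≤ n - k → 0 < esym (n - 1) j γ)
    (h : esym (n - 1) (n - k) γ ≤ esym (n - 1) (n - k + 1) γ) :
    (∀ j, 1 ≤ j → j ≤ n - k + 1 → esym (n - 1) (j - 1) γ ≤ esym (n - 1) j γ) ∧
      1 ≤ esym (n - 1) 1 γ :=
  esym_monotone_of_gammaCone_general n k γ hΓ h
end

section
/- The vector λ = (-1, -1, 2, 2, 2, 2, 2, 2, 2, 2, 2) ∈ ℝ^{11} satisfies: the sum of any 3 of its coordinates is nonnegative, σ_9(λ) > 0, but σ_8(λ) < 0. -/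
open Finset Polynomial

/-- The vector `λ = (-1, -1, 2, 2, 2, 2, 2, 2, 2, 2, 2) ∈ ℝ¹¹` has all sums of `3`
coordinates nonnegative, `σ_9(λ) > 0`, but `σ_8(λ) < 0`. -/
theorem counterexample_dim_eleven :
    let lam : Fin 11 → ℝ := ![-1, -1, 2, 2, 2, 2, 2, 2, 2, 2, 2]
    (∀ s : Finset (Fin 11), s.card = 3 → 0 ≤ ∑ i ∈ s, lam i) ∧
      0 < esym 11 9 lam ∧ esym 11 8 lam < 0 := by
  intro lam
  have hlb : ∀ i : Fin 11, -1 ≤ lam i := by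
    intro i; fin_cases i <;> norm_num [lam]
  have htwo : ∀ i : Fin 11, i ≠ 0 → i ≠ 1 → lam i = 2 := by
    intro i; fin_cases i <;> norm_num [lam]
  have hprod : (∏ i : Fin 11, (X + C (lam i))) = (X + C (-1:ℝ))^2 * (X + C 2)^9 := by
    simp [Fin.prod_univ_succ, lam]
    ring
  have hcoeff : ∀ k : ℕ, k ≤ 11 →
      esym 11 (11 - k) lam = ((X + C (-1:ℝ))^2 * (X + C 2)^9).coeff k := by
    intro k hk
    rw [← hprod, Finset.prod_X_add_C_coeff _ _ (by simpa using hk)]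
    simp [esym]
  refine ⟨?_, ?_, ?_⟩
  · intro s hs
    have hns : ¬ s ⊆ ({0, 1} : Finset (Fin 11)) := by
      intro h
      have := Finset.card_le_card h
      rw [hs] at this
      have h2 : ({0, 1} : Finset (Fin 11)).card ≤ 2 := Finset.card_insert_le _ _ |>.trans (by simp)
      omega
    obtain ⟨i, hi, hni⟩ := Finset.not_subset.mp hns
    simp only [Finset.mem_insert, Finset.mem_singleton, not_or] at hni
    have h2 : lam i = 2 := htwo i hni.1 hni.2
    rw [← Finset.insert_erase hi, Finset.sum_insert (Finset.notMem_erase _ _), h2]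
    have hrest : ((s.erase i).card : ℝ) * (-1) ≤ ∑ j ∈ s.erase i, lam j := by
      have := Finset.card_nsmul_le_sum (s.erase i) lam (-1) (fun j _ => hlb j)
      simpa [nsmul_eq_mul] using this
    have hc : (s.erase i).card = 2 := by
      rw [Finset.card_erase_of_mem hi, hs]
    rw [hc] at hrest
    push_cast at hrest
    linarith
  · rw [show (9:ℕ) = 11 - 2 from rfl, hcoeff 2 (by norm_num),
      coeff_mul, Finset.Nat.sum_antidiagonal_eq_sum_range_succ_mk]
    simp only [Finset.sum_range_succ, coeff_X_add_C_pow]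
    norm_num [Nat.choose]
  · rw [show (8:ℕ) = 11 - 3 from rfl, hcoeff 3 (by norm_num),
      coeff_mul, Finset.Nat.sum_antidiagonal_eq_sum_range_succ_mk]
    simp only [Finset.sum_range_succ, coeff_X_add_C_pow]
    norm_num [Nat.choose]
end

section
/- Let n ≥ 1 and p, j, k be natural numbers with 1 ≤ p, j ≥ 1, and k - p - 1 ≥ 1. Suppose α ∈ ℝ^p has all coordinates in [-1, 0) and β ∈ ℝ^{n-p-1} has all nonnegative coordinates, and suppose that for every choice of k-p-1 coordinates of β the sum -1 + σ_1(α) + (sum of those coordinates) is nonnegative. Then for any fixed set of j-1 indices {l₁,...,l_{j-1}} ⊆ {1,...,n-p-1}, the sum of the remaining coordinates of β satisfies ∑_{l∉{l₁,...,l_{j-1}}} β_l ≥ ((n-p-j)(p+1))/((k-p-1)p) · (-σ_1(α)), provided j ≤ n-p-1 and binomial coefficients C(n-p-j, k-p-1), C(n-p-j-1, k-p-2) are positive. -/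
open Finset

theorem Nat.choose_succ_mul_succ (N m : ℕ) : N.choose (m + 1) * (m + 1) = N * (N - 1).choose m := by
  cases N with
  | zero => simp
  | succ N => exact (Nat.add_one_mul_choose_eq N m).symm

namespace Finset

variable {ι : Type*} [DecidableEq ι]

theorem card_filter_mem_powersetCard_succ {s : Finset ι} {a : ι} (ha : a ∈ s) (m : ℕ) :
    #{T ∈ s.powersetCard (m + 1) | a ∈ T} = (#s - 1).choose m := by
  have hnot : {T ∈ s.powersetCard (m + 1) | a ∉ T} = (s.erase a).powersetCard (m + 1) := by
    ext T
    simp only [mem_filter, mem_powersetCard, subset_erase]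
    tauto
  have hsplit := card_filter_add_card_filter_not (s := s.powersetCard (m + 1)) (p := (a ∈ ·))
  obtain ⟨t, ht⟩ : ∃ t, #s = t + 1 := ⟨_, (Nat.sub_add_cancel (card_pos.2 ⟨a, ha⟩)).symm⟩
  rw [hnot, card_powersetCard, card_powersetCard, card_erase_of_mem ha, ht, Nat.add_sub_cancel,
    Nat.choose_succ_succ'] at hsplit
  rw [ht, Nat.add_sub_cancel]
  omega

/-- Double counting: each element of `s` lies in `(#s - 1).choose m` of the `(m + 1)`-subsets
of `s`. -/
theorem sum_powersetCard_sum {M : Type*} [AddCommMonoid M] (s : Finset ι) (m : ℕ) (f : ι → M) :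
    ∑ T ∈ s.powersetCard (m + 1), ∑ a ∈ T, f a = (#s - 1).choose m • ∑ a ∈ s, f a := by
  rw [sum_comm' (t' := s) (s' := fun a => {T ∈ s.powersetCard (m + 1) | a ∈ T}), smul_sum]
  · refine sum_congr rfl fun a ha => ?_
    rw [sum_const, card_filter_mem_powersetCard_succ ha]
  · intro T a
    simp only [mem_filter, mem_powersetCard]
    exact ⟨fun ⟨hT, ha⟩ => ⟨⟨hT, ha⟩, hT.1 ha⟩, fun ⟨hT, _⟩ => hT⟩

end Finset

theorem beta_partial_sum_lower_bound_general (n p j k : ℕ)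
    (hp : 1 ≤ p) (hj : 1 ≤ j) (hk : 1 ≤ k - p - 1)
    (α : Fin p → ℝ) (β : Fin (n - p - 1) → ℝ)
    (hα : ∀ i, -1 ≤ α i ∧ α i < 0)
    (hsum : ∀ T : Finset (Fin (n - p - 1)), T.card = k - p - 1 →
      0 ≤ -1 + (∑ i, α i) + ∑ l ∈ T, β l)
    (L : Finset (Fin (n - p - 1))) (hL : L.card = j - 1)
    (hb2 : 0 < Nat.choose (n - p - j - 1) (k - p - 2)) :
    ((n - p - j : ℕ) : ℝ) * ((p : ℝ) + 1) / (((k - p - 1 : ℕ) : ℝ) * (p : ℝ)) *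
        (-(∑ i, α i)) ≤ ∑ l ∈ Lᶜ, β l := by
  obtain ⟨m, hm⟩ : ∃ m, k - p - 1 = m + 1 := ⟨k - p - 2, by omega⟩
  rw [show k - p - 2 = m by omega] at hb2
  set N := n - p - j
  set S := ∑ i, α i
  set B := ∑ l ∈ Lᶜ, β l
  have hcard : #Lᶜ = N := by
    have := L.card_le_univ
    rw [card_compl, hL, Fintype.card_fin] at *
    omega
  have hSp : -(p : ℝ) ≤ S := by
    simpa using sum_le_sum fun i (_ : i ∈ univ) => (hα i).1
  -- sum `hsum` over all `(m + 1)`-subsets of `Lᶜ`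
  have havg : 0 ≤ (N.choose (m + 1) : ℝ) * (-1 + S) + ((N - 1).choose m : ℝ) * B := by
    have := sum_nonneg fun T (hT : T ∈ Lᶜ.powersetCard (m + 1)) =>
      hsum T ((mem_powersetCard.1 hT).2.trans hm.symm)
    rwa [sum_add_distrib, sum_const, card_powersetCard, sum_powersetCard_sum, hcard,
      nsmul_eq_mul, nsmul_eq_mul] at this
  have hkey : 0 ≤ N * (-1 + S) + (m + 1) * B := by
    have hchoose : (N.choose (m + 1) : ℝ) * (m + 1) = N * (N - 1).choose m := by
      exact_mod_cast Nat.choose_succ_mul_succ N m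
    refine nonneg_of_mul_nonneg_right (a := ((N - 1).choose m : ℝ)) ?_ (by exact_mod_cast hb2)
    linear_combination (m + 1 : ℝ) * havg + (-1 + S) * hchoose
  have hp' : (0 : ℝ) < p := by exact_mod_cast hp
  rw [hm, div_mul_eq_mul_div, div_le_iff₀ (by positivity)]
  push_cast
  -- `(m + 1) B ≥ N (1 - S)` and `1 ≥ -S / p`
  nlinarith [mul_nonneg (Nat.cast_nonneg N : (0 : ℝ) ≤ N) (neg_le_iff_add_nonneg.1 hSp)]

/-- Lower bound for partial sums of the nonnegative eigenvalues coming from the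
`m`-plurisubharmonicity condition: if every sum of `k-p-1` coordinates of `β`
together with `-1 + σ_1(α)` is nonnegative, then the sum of the coordinates of `β`
outside any fixed set of `j-1` indices is at least
`((n-p-j)(p+1))/((k-p-1)p) · (-σ_1(α))`. -/
theorem beta_partial_sum_lower_bound (n p j k : ℕ)
    (hp : 1 ≤ p) (hj : 1 ≤ j) (hk : 1 ≤ k - p - 1)
    (α : Fin p → ℝ) (β : Fin (n - p - 1) → ℝ)
    (hα : ∀ i, -1 ≤ α i ∧ α i < 0) (hβ : ∀ l, 0 ≤ β l)
    (hsum : ∀ T : Finset (Fin (n - p - 1)), T.card = k - p - 1 →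
      0 ≤ -1 + (∑ i, α i) + ∑ l ∈ T, β l)
    (L : Finset (Fin (n - p - 1))) (hL : L.card = j - 1)
    (hjN : j ≤ n - p - 1)
    (hb1 : 0 < Nat.choose (n - p - j) (k - p - 1))
    (hb2 : 0 < Nat.choose (n - p - j - 1) (k - p - 2)) :
    ((n - p - j : ℕ) : ℝ) * ((p : ℝ) + 1) / (((k - p - 1 : ℕ) : ℝ) * (p : ℝ)) *
        (-(∑ i, α i)) ≤ ∑ l ∈ Lᶜ, β l :=
  beta_partial_sum_lower_bound_general n p j k hp hj hk α β hα hsum L hL hb2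
end

section
/- Let n ≥ m ≥ 1 and α > 0 be real. If m^{C(n-1,m)·α}·(m+1)^{C(n-1,m-1)·α}/(2n + 2·C(n,m)·α) ≤ m^{C(n,m)·α}/(2n), then (1 + 1/m)^{C(n-1,m-1)·α} ≤ 1 + (1/m)·C(n-1,m-1)·α; consequently α ≤ 1/C(n-1, m-1). -/
/-!
Pascal's rule `C(n,m) = C(n-1,m) + C(n-1,m-1)` splits `m^{C(n,m)α}` as `m^{C(n-1,m)α} m^{C(n-1,m-1)α}`,
so after cancelling, the hypothesis reads `(1 + 1/m)^{C(n-1,m-1)α} ≤ 1 + C(n,m)α/n`, and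
`m C(n,m) = n C(n-1,m-1)` turns the right side into `1 + C(n-1,m-1)α/m`. The strict Bernoulli
inequality `(1 + s)^p > 1 + ps` for `p > 1` then forces `C(n-1,m-1)α ≤ 1`.
-/

open Real

theorem Nat.mul_choose_eq_mul_choose_pred {n k : ℕ} (hk : 0 < k) :
    k * n.choose k = n * (n - 1).choose (k - 1) := by
  obtain ⟨l, rfl⟩ : ∃ l, k = l + 1 := Nat.exists_eq_add_of_le' hk
  rcases n with _ | n
  · simp
  · simpa [mul_comm] using (Nat.add_one_mul_choose_eq n l).symm

theorem one_add_one_div_rpow_le_of_rpow_mul_div_le {x a b c N : ℝ} (hx : 0 < x) (hN : 0 < N)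
    (hNc : 0 < N + c)
    (h : x ^ a * (x + 1) ^ b / (2 * N + 2 * c) ≤ x ^ (a + b) / (2 * N)) :
    (1 + 1 / x) ^ b ≤ 1 + c / N := by
  rw [rpow_add hx, div_le_div_iff₀ (by linarith) (by linarith), mul_assoc, mul_assoc,
    mul_le_mul_iff_right₀ (rpow_pos_of_pos hx a)] at h
  have hxb : 0 < x ^ b := rpow_pos_of_pos hx b
  calc (1 + 1 / x) ^ b = (x + 1) ^ b / x ^ b := by
        rw [← div_rpow (by linarith) hx.le, add_div, div_self hx.ne', add_comm]
    _ ≤ (2 * N + 2 * c) / (2 * N) := by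
        rw [div_le_div_iff₀ hxb (by linarith)]; linarith
    _ = 1 + c / N := by field_simp

theorem le_one_of_rpow_one_add_le {s p : ℝ} (hs : -1 ≤ s) (hs0 : s ≠ 0)
    (h : (1 + s) ^ p ≤ 1 + p * s) : p ≤ 1 := by
  by_contra! hp
  exact (one_add_mul_self_lt_rpow_one_add hs hs0 hp).not_ge h

/-- The key numerical step in the failure of the integral comparison principle: the
integral inequality coming from the radial test functions forces
`(1 + 1/m)^{C(n-1,m-1)·α} ≤ 1 + (1/m)·C(n-1,m-1)·α`, and consequently
`α ≤ 1/C(n-1,m-1)`. -/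
theorem comparison_principle_numerics (n m : ℕ) (α : ℝ)
    (hm : 1 ≤ m) (hmn : m ≤ n) (hα : 0 < α)
    (h : (m : ℝ) ^ ((((n - 1).choose m : ℕ) : ℝ) * α) *
          ((m : ℝ) + 1) ^ ((((n - 1).choose (m - 1) : ℕ) : ℝ) * α) /
          (2 * (n : ℝ) + 2 * ((n.choose m : ℕ) : ℝ) * α) ≤
        (m : ℝ) ^ (((n.choose m : ℕ) : ℝ) * α) / (2 * (n : ℝ))) :
    (1 + 1 / (m : ℝ)) ^ ((((n - 1).choose (m - 1) : ℕ) : ℝ) * α) ≤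
        1 + (1 / (m : ℝ)) * (((n - 1).choose (m - 1) : ℕ) : ℝ) * α ∧
      α ≤ 1 / (((n - 1).choose (m - 1) : ℕ) : ℝ) := by
  have hmR : (0 : ℝ) < m := by exact_mod_cast hm
  have hnR : (0 : ℝ) < n := by exact_mod_cast hm.trans hmn
  have hB : (0 : ℝ) < ((n - 1).choose (m - 1) : ℕ) := by exact_mod_cast Nat.choose_pos (by omega)
  have hpascal : ((n.choose m : ℕ) : ℝ) * α =
      (((n - 1).choose m : ℕ) : ℝ) * α + (((n - 1).choose (m - 1) : ℕ) : ℝ) * α := by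
    rw [Nat.choose_eq_choose_pred_add (by omega) hm]; push_cast; ring
  have hratio : ((n.choose m : ℕ) : ℝ) * α / n =
      1 / m * (((n - 1).choose (m - 1) : ℕ) : ℝ) * α := by
    have hmul := congrArg (Nat.cast (R := ℝ)) (Nat.mul_choose_eq_mul_choose_pred (n := n) hm)
    push_cast at hmul
    field_simp
    linear_combination hmul
  have key := one_add_one_div_rpow_le_of_rpow_mul_div_le (a := (((n - 1).choose m : ℕ) : ℝ) * α)
    (c := ((n.choose m : ℕ) : ℝ) * α) hmR hnR (by positivity) (by rwa [← hpascal, ← mul_assoc])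
  rw [hratio] at key
  refine ⟨key, ?_⟩
  rw [le_div_iff₀ hB, mul_comm]
  refine le_one_of_rpow_one_add_le (s := 1 / m) (by linarith [one_div_pos.2 hmR]) (by positivity) ?_
  linarith
end
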